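/- arXiv:2004.01040 — 2 statements merged into one kernel-verified Lean document; each statement's English description precedes it below -/
import Mathlib

section
/- Let p and q be distinct odd primes such that p ≡ 1 (mod 4) or q ≡ 1 (mod 4), and such that p is not a quadratic residue modulo q. Then the reduced discriminant of H_ℚ(p,q) equals pq; in particular H_ℚ(p,q) is a division algebra. -/
/-!
Quadratic reciprocity and the hypothesis `p ≡ 1 (mod 4)` or `q ≡ 1 (mod 4)` make each of `p, q`
a non-residue modulo the other. At `v = p` the reduced norm then splits as
`(t² - q z²) - p (u² - q w²)`; since `q` is a non-residue, `‖t² - q z²‖ = max(‖t‖, ‖z‖)²` is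
an even power of `p`, while the second term has odd valuation, so the norm form is anisotropic.
The same holds at `v = q`. At an odd `v ∤ pq` the conic `p s² + q t² = 1` has a point mod `v`,
which Hensel lifts, and at `v = 2` one of `p + q z²`, `q + p z²` with `z ∈ {0, 2}` is
`≡ 1 (mod 8)`, hence a `2`-adic square; either way the norm form is isotropic. Finally
`ℍ_ℚ(p,q)` embeds in its `p`-adic completion, so it is a division algebra.
-/

open Quaternion Polynomial

/-- The rational quaternion algebra `H_ℚ(a,b)` ramifies at the rational prime `v`
if its base change to `ℚ_v` is a division algebra. -/
def RatQuatRamifiedAt (a b : ℚ) (v : ℕ) [Fact v.Prime] : Prop :=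
  ∀ x : ℍ[ℚ_[v], (a : ℚ_[v]), (b : ℚ_[v])], x ≠ 0 → IsUnit x

namespace QuaternionAlgebra

variable {K L : Type*} [Field K] [Field L] {a b : K}

def reducedNorm (x : ℍ[K,a,b]) : K :=
  x.re ^ 2 - a * x.imI ^ 2 - b * x.imJ ^ 2 + a * b * x.imK ^ 2

theorem mul_star_eq_reducedNorm (x : ℍ[K,a,b]) : x * star x = ↑(reducedNorm x) := by
  rw [mul_star_eq_coe]
  congr 1
  simp only [re_mul, re_star, imI_star, imJ_star, imK_star, reducedNorm]
  ring

theorem isUnit_iff_reducedNorm_ne_zero {x : ℍ[K,a,b]} : IsUnit x ↔ reducedNorm x ≠ 0 := by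
  refine ⟨fun hx hN => ?_,
    fun hN => isUnit_iff_exists.mpr ⟨(reducedNorm x)⁻¹ • star x, ?_, ?_⟩⟩
  · have : star x = 0 :=
      hx.mul_right_eq_zero.mp (by rw [mul_star_eq_reducedNorm, hN, coe_zero])
    exact hx.ne_zero (star_eq_zero.mp this)
  · rw [mul_smul_comm, mul_star_eq_reducedNorm, smul_coe, inv_mul_cancel₀ hN, coe_one]
  · rw [smul_mul_assoc, star_comm_self', mul_star_eq_reducedNorm, smul_coe,
      inv_mul_cancel₀ hN, coe_one]

theorem forall_ne_zero_isUnit_iff :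
    (∀ x : ℍ[K,a,b], x ≠ 0 → IsUnit x) ↔ ∀ x : ℍ[K,a,b], reducedNorm x = 0 → x = 0 := by
  simp only [isUnit_iff_reducedNorm_ne_zero, ne_eq, not_imp_not]

theorem forall_ne_zero_isUnit_of_map (f : K →+* L)
    (h : ∀ y : ℍ[L, f a, f b], y ≠ 0 → IsUnit y) : ∀ x : ℍ[K,a,b], x ≠ 0 → IsUnit x := by
  rw [forall_ne_zero_isUnit_iff] at h ⊢
  intro x hx
  have hmap := h ⟨f x.re, f x.imI, f x.imJ, f x.imK⟩ <| by
    simpa [reducedNorm] using congrArg f hx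
  simpa [QuaternionAlgebra.ext_iff] using hmap

end QuaternionAlgebra

namespace PadicInt

variable {v : ℕ} [Fact v.Prime]

theorem toZMod_eq_zero_iff_norm_lt_one {x : ℤ_[v]} : toZMod x = 0 ↔ ‖x‖ < 1 := by
  rw [← RingHom.mem_ker, ker_toZMod, IsLocalRing.mem_maximalIdeal, mem_nonunits]

theorem norm_eq_one_iff_toZMod_ne_zero {x : ℤ_[v]} : ‖x‖ = 1 ↔ toZMod x ≠ 0 := by
  rw [ne_eq, toZMod_eq_zero_iff_norm_lt_one, not_lt, (norm_le_one x).ge_iff_eq, eq_comm]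

theorem isSquare_of_norm_sq_sub_lt {r u : ℤ_[v]} (h : ‖r ^ 2 - u‖ < ‖2 * r‖ ^ 2) :
    IsSquare u := by
  have hF : aeval r (X ^ 2 - C u) = r ^ 2 - u := by simp
  have hF' : aeval r (derivative (X ^ 2 - C u)) = 2 * r := by simp [one_add_one_eq_two]
  obtain ⟨z, hz, -⟩ := hensels_lemma (F := X ^ 2 - C u) (a := r) (by rwa [hF, hF'])
  have hz : z ^ 2 - u = 0 := by simpa using hz
  exact ⟨z, by rw [← sq, sub_eq_zero.mp hz]⟩

theorem isSquare_of_isSquare_toZMod (hv2 : v ≠ 2) {u : ℤ_[v]} (hu : toZMod u ≠ 0)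
    (h : IsSquare (toZMod u)) : IsSquare u := by
  obtain ⟨ρ, hρ⟩ := h
  obtain ⟨r, rfl⟩ := ZMod.ringHom_surjective toZMod ρ
  refine isSquare_of_norm_sq_sub_lt (r := r) ?_
  have h2r : ‖2 * r‖ = 1 := by
    rw [norm_eq_one_iff_toZMod_ne_zero, map_mul, map_ofNat]
    refine mul_ne_zero (Ring.two_ne_zero (by rwa [ZMod.ringChar_zmod_n])) ?_
    rintro h0
    exact hu (by rw [hρ, h0, mul_zero])
  rw [h2r, one_pow, ← toZMod_eq_zero_iff_norm_lt_one, map_sub, map_pow, hρ, sq, sub_self]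

theorem isSquare_natCast_of_mod_eight_eq_one {n : ℕ} (hn : n % 8 = 1) : IsSquare (n : ℤ_[2]) := by
  refine isSquare_of_norm_sq_sub_lt (r := 1) ?_
  obtain ⟨k, hk⟩ : 8 ∣ n - 1 := by omega
  have : (1 : ℤ_[2]) ^ 2 - n = -(2 ^ 3 * k) := by
    rw [show n = 8 * k + 1 by omega]; push_cast; ring
  have h2 : ‖(2 : ℤ_[2])‖ = 2⁻¹ := by exact_mod_cast norm_p (p := 2)
  rw [this, norm_neg, norm_mul, norm_pow, mul_one, h2]
  calc (2⁻¹ : ℝ) ^ 3 * ‖(k : ℤ_[2])‖ ≤ 2⁻¹ ^ 3 * 1 := by gcongr; exact norm_le_one _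
    _ < 2⁻¹ ^ 2 := by norm_num

theorem norm_sq_sub_eq_one {c : ℤ_[v]} (hc : ¬IsSquare (toZMod c)) (r : ℤ_[v]) :
    ‖r ^ 2 - c‖ = 1 := by
  rw [norm_eq_one_iff_toZMod_ne_zero, map_sub, map_pow, sub_ne_zero]
  exact fun h => hc ⟨toZMod r, by rw [← h, sq]⟩

end PadicInt

theorem max_norm_eq_zero_iff {E : Type*} [NormedAddGroup E] {x y : E} :
    max ‖x‖ ‖y‖ = 0 ↔ x = 0 ∧ y = 0 := by
  simp [le_antisymm_iff]

namespace Padic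

variable {v : ℕ} [Fact v.Prime]

theorem norm_sq_ne_norm_p (r : ℚ_[v]) : ‖r‖ ^ 2 ≠ ‖(v : ℚ_[v])‖ := by
  have hv : v.Prime := Fact.out
  intro h
  have hr : r ≠ 0 := by
    rintro rfl
    rw [norm_zero, sq, zero_mul, norm_p, eq_comm, inv_eq_zero, Nat.cast_eq_zero] at h
    exact hv.ne_zero h
  rw [← norm_pow, norm_eq_zpow_neg_valuation (pow_ne_zero 2 hr),
    norm_eq_zpow_neg_valuation (by exact_mod_cast hv.ne_zero), valuation_pow, valuation_p] at h
  have := zpow_right_injective₀ (by exact_mod_cast hv.pos) (by exact_mod_cast hv.ne_one) h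
  omega

section NonResidue

variable {c : ℤ_[v]} (hc : ¬IsSquare (PadicInt.toZMod c))
include hc

theorem norm_sq_sub_mul_sq (x y : ℚ_[v]) : ‖x ^ 2 - c * y ^ 2‖ = max ‖x‖ ‖y‖ ^ 2 := by
  have hc1 : ‖(c : ℚ_[v])‖ = 1 := by simpa using PadicInt.norm_sq_sub_eq_one hc 0
  rcases eq_or_ne ‖x‖ ‖y‖ with hxy | hxy
  · rcases eq_or_ne y 0 with rfl | hy
    · simp_all
    · have hr : ‖x / y‖ = 1 := by rw [norm_div, hxy, div_self (norm_ne_zero_iff.mpr hy)]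
      have : ‖(x / y) ^ 2 - c‖ = 1 := PadicInt.norm_sq_sub_eq_one hc ⟨x / y, hr.le⟩
      calc ‖x ^ 2 - c * y ^ 2‖ = ‖y‖ ^ 2 * ‖(x / y) ^ 2 - c‖ := by
            rw [← norm_pow, ← norm_mul]; congr 1; field_simp
        _ = max ‖x‖ ‖y‖ ^ 2 := by rw [this, mul_one, hxy, max_self]
  · have hne : ‖x ^ 2‖ ≠ ‖-(c * y ^ 2)‖ := by
      rw [norm_neg, norm_mul, hc1, one_mul, norm_pow, norm_pow]
      exact fun h => hxy ((pow_left_inj₀ (norm_nonneg x) (norm_nonneg y) two_ne_zero).mp h)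
    rw [sub_eq_add_neg, add_eq_max_of_ne hne, norm_neg, norm_mul, hc1, one_mul, norm_pow,
      norm_pow]
    rcases le_total ‖x‖ ‖y‖ with h | h
    · rw [max_eq_right h, max_eq_right (by gcongr)]
    · rw [max_eq_left h, max_eq_left (by gcongr)]

theorem eq_zero_of_sq_sub_mul_sq_eq_zero {x y : ℚ_[v]} (h : x ^ 2 - c * y ^ 2 = 0) :
    x = 0 ∧ y = 0 := by
  rw [← max_norm_eq_zero_iff, ← pow_eq_zero_iff two_ne_zero, ← norm_sq_sub_mul_sq hc, h,
    norm_zero]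

theorem eq_zero_of_sq_sub_mul_sq_eq_p_mul {t z u w : ℚ_[v]}
    (h : t ^ 2 - c * z ^ 2 = v * (u ^ 2 - c * w ^ 2)) : t = 0 ∧ z = 0 ∧ u = 0 ∧ w = 0 := by
  have exists_norm_eq_max (x y : ℚ_[v]) : ∃ r, max ‖x‖ ‖y‖ = ‖r‖ :=
    (max_choice ‖x‖ ‖y‖).elim (⟨x, ·⟩) (⟨y, ·⟩)
  obtain ⟨r₁, hr₁⟩ := exists_norm_eq_max t z
  obtain ⟨r₂, hr₂⟩ := exists_norm_eq_max u w
  rcases eq_or_ne r₂ 0 with rfl | hr₂0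
  · obtain ⟨rfl, rfl⟩ := max_norm_eq_zero_iff.mp (by simpa using hr₂)
    obtain ⟨ht, hz⟩ := eq_zero_of_sq_sub_mul_sq_eq_zero hc (by simpa using h)
    exact ⟨ht, hz, rfl, rfl⟩
  · have hsq : ‖r₁‖ ^ 2 = ‖(v : ℚ_[v])‖ * ‖r₂‖ ^ 2 := by
      rw [← hr₁, ← hr₂, ← norm_sq_sub_mul_sq hc, ← norm_sq_sub_mul_sq hc, h, norm_mul]
    refine absurd ?_ (norm_sq_ne_norm_p (r₁ / r₂))
    rw [norm_div, div_pow, hsq, mul_div_cancel_right₀ _ (by positivity)]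

end NonResidue

theorem exists_mul_sq_add_mul_sq_eq_one_of_toZMod (hv2 : v ≠ 2) {a b : ℤ_[v]}
    (ha : PadicInt.toZMod a ≠ 0) {x y : ZMod v} (hx : x ≠ 0)
    (h : PadicInt.toZMod a * x ^ 2 + PadicInt.toZMod b * y ^ 2 = 1) :
    ∃ s t : ℚ_[v], a * s ^ 2 + b * t ^ 2 = 1 := by
  obtain ⟨t, rfl⟩ := ZMod.ringHom_surjective PadicInt.toZMod y
  have hsq : PadicInt.toZMod (a * (1 - b * t ^ 2)) = (PadicInt.toZMod a * x) ^ 2 := by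
    rw [map_mul, map_sub, map_one, map_mul, map_pow, ← h]; ring
  obtain ⟨r, hr⟩ := PadicInt.isSquare_of_isSquare_toZMod hv2
    (by rw [hsq]; exact pow_ne_zero 2 (mul_ne_zero ha hx)) ⟨_, by rw [hsq, sq]⟩
  have ha0 : (a : ℚ_[v]) ≠ 0 := by
    rintro h0
    exact ha (by rw [show a = 0 from PadicInt.ext h0, map_zero])
  have hr' := congrArg ((↑) : ℤ_[v] → ℚ_[v]) hr
  push_cast at hr'
  refine ⟨r / a, t, ?_⟩
  field_simp
  linear_combination -hr'

theorem exists_mul_sq_add_mul_sq_eq_one (hv2 : v ≠ 2) {a b : ℤ_[v]}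
    (ha : PadicInt.toZMod a ≠ 0) (hb : PadicInt.toZMod b ≠ 0) :
    ∃ s t : ℚ_[v], a * s ^ 2 + b * t ^ 2 = 1 := by
  obtain ⟨x, y, hxy⟩ := FiniteField.exists_root_sum_quadratic
    (f := C (PadicInt.toZMod a) * X ^ 2) (g := C (PadicInt.toZMod b) * X ^ 2 - C 1)
    (by rw [degree_C_mul_X_pow 2 ha]; rfl)
    (by
      rw [degree_sub_C (by rw [degree_C_mul_X_pow 2 hb]; norm_num), degree_C_mul_X_pow 2 hb]
      rfl)
    (by rw [ZMod.card]; exact (Fact.out : v.Prime).eq_two_or_odd.resolve_left hv2)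
  have h : PadicInt.toZMod a * x ^ 2 + PadicInt.toZMod b * y ^ 2 = 1 := by
    simp only [eval_sub, eval_mul, eval_C, eval_pow, eval_X] at hxy
    linear_combination hxy
  rcases eq_or_ne x 0 with rfl | hx
  · obtain ⟨t, s, hts⟩ := exists_mul_sq_add_mul_sq_eq_one_of_toZMod hv2 hb (b := a)
      (x := y) (y := 0) (by rintro rfl; simp at h) (by linear_combination h)
    exact ⟨s, t, by linear_combination hts⟩
  · exact exists_mul_sq_add_mul_sq_eq_one_of_toZMod hv2 ha hx h

theorem exists_sq_eq_add_mul_sq_of_mod_four_eq_one {m n : ℕ} (hm : m % 4 = 1)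
    (hn : n % 2 = 1) : ∃ s z : ℚ_[2], s ^ 2 = m + n * z ^ 2 := by
  have lift {k : ℕ} (hk : k % 8 = 1) : ∃ s : ℚ_[2], s ^ 2 = k := by
    obtain ⟨s, hs⟩ := PadicInt.isSquare_natCast_of_mod_eight_eq_one hk
    have hs := congrArg ((↑) : ℤ_[2] → ℚ_[2]) hs
    push_cast at hs
    exact ⟨s, by rw [hs, sq]⟩
  rcases (by omega : m % 8 = 1 ∨ (m + n * 2 ^ 2) % 8 = 1) with h | h
  · obtain ⟨s, hs⟩ := lift h
    exact ⟨s, 0, by simp [hs]⟩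
  · obtain ⟨s, hs⟩ := lift h
    exact ⟨s, 2, by rw [hs]; push_cast; ring⟩

end Padic

section Ramification

open QuaternionAlgebra

variable {v : ℕ} [Fact v.Prime]

theorem ratQuatRamifiedAt_self_left {n : ℕ} (hn : ¬IsSquare (n : ZMod v)) :
    RatQuatRamifiedAt v n v := by
  have hc : ¬IsSquare (PadicInt.toZMod (n : ℤ_[v])) := by rwa [map_natCast]
  refine forall_ne_zero_isUnit_iff.mpr fun x hx => ?_
  obtain ⟨h₁, h₂, h₃, h₄⟩ := Padic.eq_zero_of_sq_sub_mul_sq_eq_p_mul hc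
    (t := x.re) (z := x.imJ) (u := x.imI) (w := x.imK) <| by
      rw [reducedNorm] at hx; push_cast at hx ⊢; linear_combination hx
  ext <;> assumption

theorem ratQuatRamifiedAt_self_right {n : ℕ} (hn : ¬IsSquare (n : ZMod v)) :
    RatQuatRamifiedAt n v v := by
  have hc : ¬IsSquare (PadicInt.toZMod (n : ℤ_[v])) := by rwa [map_natCast]
  refine forall_ne_zero_isUnit_iff.mpr fun x hx => ?_
  obtain ⟨h₁, h₂, h₃, h₄⟩ := Padic.eq_zero_of_sq_sub_mul_sq_eq_p_mul hc
    (t := x.re) (z := x.imI) (u := x.imJ) (w := x.imK) <| by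
      rw [reducedNorm] at hx; push_cast at hx ⊢; linear_combination hx
  ext <;> assumption

theorem not_ratQuatRamifiedAt_of_not_dvd (hv2 : v ≠ 2) {m n : ℕ} (hm : ¬v ∣ m) (hn : ¬v ∣ n) :
    ¬RatQuatRamifiedAt m n v := by
  have toZMod_ne_zero {k : ℕ} (hk : ¬v ∣ k) : PadicInt.toZMod (k : ℤ_[v]) ≠ 0 := by
    rwa [map_natCast, ne_eq, ZMod.natCast_eq_zero_iff]
  obtain ⟨s, t, hst⟩ :=
    Padic.exists_mul_sq_add_mul_sq_eq_one hv2 (toZMod_ne_zero hm) (toZMod_ne_zero hn)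
  intro hram
  have := forall_ne_zero_isUnit_iff.mp hram ⟨1, s, t, 0⟩ <| by
    rw [reducedNorm]; push_cast at hst ⊢; linear_combination -hst
  simpa using congrArg re this

theorem not_ratQuatRamifiedAt_two {m n : ℕ} (hm : m % 2 = 1) (hn : n % 2 = 1)
    (h : m % 4 = 1 ∨ n % 4 = 1) : ¬RatQuatRamifiedAt m n 2 := by
  intro hram
  replace hram := forall_ne_zero_isUnit_iff.mp hram
  rcases h with h | h
  · obtain ⟨s, z, hsz⟩ := Padic.exists_sq_eq_add_mul_sq_of_mod_four_eq_one h hn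
    have := hram ⟨s, 1, z, 0⟩ <| by
      rw [reducedNorm]; push_cast; linear_combination hsz
    simpa using congrArg imI this
  · obtain ⟨s, z, hsz⟩ := Padic.exists_sq_eq_add_mul_sq_of_mod_four_eq_one h hm
    have := hram ⟨s, z, 1, 0⟩ <| by
      rw [reducedNorm]; push_cast; linear_combination hsz
    simpa using congrArg imJ this

end Ramification

theorem discriminant_eq_p_mul_q_general
    (p q : ℕ) [Fact p.Prime] [Fact q.Prime] (hp2 : p ≠ 2) (hq2 : q ≠ 2)
    (h1 : p % 4 = 1 ∨ q % 4 = 1) (hres : legendreSym q p = -1) :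
    (∀ (v : ℕ) [Fact v.Prime],
        (RatQuatRamifiedAt (p : ℚ) (q : ℚ) v ↔ v = p ∨ v = q)) ∧
      ∀ x : ℍ[ℚ, (p : ℚ), (q : ℚ)], x ≠ 0 → IsUnit x := by
  have hp : p.Prime := Fact.out
  have hq : q.Prime := Fact.out
  have hqp : legendreSym p q = -1 := by
    rcases h1 with h | h
    · rwa [← legendreSym.quadratic_reciprocity_one_mod_four h hq2]
    · rwa [legendreSym.quadratic_reciprocity_one_mod_four h hp2]
  have ram_p : RatQuatRamifiedAt p q p :=
    ratQuatRamifiedAt_self_left ((legendreSym.eq_neg_one_iff' p).mp hqp)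
  have ram_q : RatQuatRamifiedAt p q q :=
    ratQuatRamifiedAt_self_right ((legendreSym.eq_neg_one_iff' q).mp hres)
  refine ⟨fun v _ => ⟨fun hram => ?_, by rintro (rfl | rfl) <;> assumption⟩,
    QuaternionAlgebra.forall_ne_zero_isUnit_of_map (Rat.castHom ℚ_[p]) ram_p⟩
  by_contra! hvpq
  have hv : v.Prime := Fact.out
  rcases eq_or_ne v 2 with rfl | hv2
  · exact not_ratQuatRamifiedAt_two (hp.eq_two_or_odd.resolve_left hp2)
      (hq.eq_two_or_odd.resolve_left hq2) h1 hram
  · exact not_ratQuatRamifiedAt_of_not_dvd hv2 (mt (Nat.prime_dvd_prime_iff_eq hv hp).mp hvpq.1)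
      (mt (Nat.prime_dvd_prime_iff_eq hv hq).mp hvpq.2) hram

/-- for distinct odd primes `p, q` with `p ≡ 1 (mod 4)` or
`q ≡ 1 (mod 4)` and `p` not a quadratic residue mod `q`, the reduced discriminant
of `H_ℚ(p,q)` is `pq`; in particular `H_ℚ(p,q)` is a division algebra. -/
theorem discriminant_eq_p_mul_q
    (p q : ℕ) [Fact p.Prime] [Fact q.Prime] (hp2 : p ≠ 2) (hq2 : q ≠ 2) (hpq : p ≠ q)
    (h1 : p % 4 = 1 ∨ q % 4 = 1) (hres : legendreSym q p = -1) :
    (∀ (v : ℕ) [Fact v.Prime],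
        (RatQuatRamifiedAt (p : ℚ) (q : ℚ) v ↔ v = p ∨ v = q)) ∧
      ∀ x : ℍ[ℚ, (p : ℚ), (q : ℚ)], x ≠ 0 → IsUnit x :=
  discriminant_eq_p_mul_q_general p q hp2 hq2 h1 hres
end

section
/- If a prime integer p divides the reduced discriminant of the rational quaternion algebra H_ℚ(a,b) for nonzero integers a, b, then p divides 2ab. -/
/-! If `p ∤ 2ab`, then `p` is odd and `a`, `b` are `p`-adic units. Counting squares shows that
`a x² + b y² = 1` has a solution mod `p`; one of `x`, `y` is then nonzero, so Hensel's lemma in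
that variable lifts the solution to `ℤ_p`. Then `z = 1 + x i + y j` has reduced norm `z * z̄ = 1 - a x² - b y² = 0`, so `z` is a
nonzero zero divisor of `H_{ℚ_p}(a,b)`, which is therefore not a division algebra. -/

open Polynomial Quaternion

theorem FiniteField.exists_mul_sq_add_mul_sq_eq {K : Type*} [Field K] [Fintype K]
    (hK : Fintype.card K % 2 = 1) {α β : K} (hα : α ≠ 0) (hβ : β ≠ 0) (c : K) :
    ∃ x y : K, α * x ^ 2 + β * y ^ 2 = c := by
  have hf : (C α * X ^ 2).degree = 2 := degree_C_mul_X_pow 2 hα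
  have hg : (C β * X ^ 2 - C c).degree = 2 := by
    rw [degree_sub_C (by rw [degree_C_mul_X_pow 2 hβ]; norm_num), degree_C_mul_X_pow 2 hβ]; rfl
  obtain ⟨x, y, hxy⟩ := exists_root_sum_quadratic hf hg hK
  refine ⟨x, y, ?_⟩
  simp only [eval_mul, eval_pow, eval_C, eval_X, eval_sub] at hxy
  linear_combination hxy

namespace PadicInt

variable {p : ℕ} [Fact p.Prime]

theorem isUnit_iff_toZMod_ne_zero {z : ℤ_[p]} : IsUnit z ↔ toZMod z ≠ 0 := by
  rw [Ne, ← RingHom.mem_ker, ker_toZMod, IsLocalRing.mem_maximalIdeal, mem_nonunits_iff, not_not]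

theorem exists_mul_sq_eq_of_toZMod_eq (hp : p ≠ 2) {α c x₀ : ℤ_[p]} (hα : IsUnit α)
    (hx₀ : IsUnit x₀) (h : toZMod (α * x₀ ^ 2) = toZMod c) : ∃ x, α * x ^ 2 = c := by
  have h2 : IsUnit (2 : ℤ_[p]) := isUnit_iff_toZMod_ne_zero.mpr <| by
    rw [map_ofNat]
    exact Ring.two_ne_zero (by rwa [ZMod.ringChar_zmod_n])
  set F : ℤ_[p][X] := C α * X ^ 2 - C c
  have hF : ¬IsUnit (F.aeval x₀) := by
    rw [isUnit_iff_toZMod_ne_zero, not_not]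
    simp [F, h]
  have hF' : F.derivative.aeval x₀ = 2 * α * x₀ := by
    simp only [F, derivative_sub, derivative_mul, derivative_C, zero_mul, derivative_X_pow_succ,
      Nat.cast_one, map_add, map_one, pow_one, zero_add, sub_zero, coe_aeval_eq_eval, eval_mul,
      eval_C, eval_add, eval_one, eval_X]
    ring
  have hnorm : ‖F.aeval x₀‖ < ‖F.derivative.aeval x₀‖ ^ 2 := by
    rw [hF', isUnit_iff.mp ((h2.mul hα).mul hx₀), one_pow]
    exact not_isUnit_iff.mp hF
  obtain ⟨x, hx, -⟩ := hensels_lemma hnorm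
  exact ⟨x, by simpa [F, sub_eq_zero] using hx⟩

theorem exists_mul_sq_add_mul_sq_eq_one_of_toZMod (hp : p ≠ 2) {α β u v : ℤ_[p]}
    (hα : IsUnit α) (hu : IsUnit u) (h : toZMod (α * u ^ 2 + β * v ^ 2) = 1) :
    ∃ x y : ℤ_[p], α * x ^ 2 + β * y ^ 2 = 1 := by
  obtain ⟨x, hx⟩ := exists_mul_sq_eq_of_toZMod_eq hp hα hu (c := 1 - β * v ^ 2)
    (by rw [map_sub, map_one, ← h]; simp)
  exact ⟨x, v, by rw [hx]; ring⟩

theorem exists_mul_sq_add_mul_sq_eq_one (hp : p ≠ 2) {α β : ℤ_[p]} (hα : IsUnit α)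
    (hβ : IsUnit β) : ∃ x y : ℤ_[p], α * x ^ 2 + β * y ^ 2 = 1 := by
  have hcard : Fintype.card (ZMod p) % 2 = 1 := by
    rw [ZMod.card]
    exact Nat.odd_iff.mp ((Fact.out : p.Prime).odd_of_ne_two hp)
  obtain ⟨x₀, y₀, hxy₀⟩ := FiniteField.exists_mul_sq_add_mul_sq_eq hcard
    (isUnit_iff_toZMod_ne_zero.mp hα) (isUnit_iff_toZMod_ne_zero.mp hβ) 1
  obtain ⟨u, rfl⟩ := ZMod.ringHom_surjective toZMod x₀
  obtain ⟨v, rfl⟩ := ZMod.ringHom_surjective toZMod y₀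
  by_cases hu : IsUnit u
  · exact exists_mul_sq_add_mul_sq_eq_one_of_toZMod hp hα hu (by simpa using hxy₀)
  · have hv : IsUnit v := by
      by_contra hv
      rw [isUnit_iff_toZMod_ne_zero, not_not] at hu hv
      simp [hu, hv] at hxy₀
    obtain ⟨y, x, hyx⟩ := exists_mul_sq_add_mul_sq_eq_one_of_toZMod (u := v) (v := u) hp hβ hv
      (by simpa [add_comm] using hxy₀)
    exact ⟨x, y, by rw [add_comm, hyx]⟩

end PadicInt

theorem QuaternionAlgebra.not_isUnit_mk_one_of_mul_sq_add_mul_sq_eq_one {R : Type*} [CommRing R]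
    [Nontrivial R] {c₁ c₂ x y : R} (h : c₁ * x ^ 2 + c₂ * y ^ 2 = 1) :
    ¬IsUnit (⟨1, x, y, 0⟩ : ℍ[R, c₁, c₂]) := by
  intro hz
  have hstar : star (⟨1, x, y, 0⟩ : ℍ[R, c₁, c₂]) ≠ 0 := fun h0 => by
    simpa using congrArg re h0
  refine hstar (hz.mul_right_eq_zero.mp ?_)
  ext <;> simp only [star_mk, mk_mul_mk, re_zero, imI_zero, imJ_zero, imK_zero]
  · linear_combination -h
  all_goals ring

theorem prime_dvd_two_mul_a_mul_b_of_ramified_general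
    (a b : ℤ) (p : ℕ) [Fact p.Prime]
    (hram : ∀ x : ℍ[ℚ_[p], (a : ℚ_[p]), (b : ℚ_[p])], x ≠ 0 → IsUnit x) :
    (p : ℤ) ∣ 2 * a * b := by
  by_contra hdvd
  have hp : p ≠ 2 := by
    rintro rfl
    exact hdvd ⟨a * b, by ring⟩
  have isUnit_of_dvd : ∀ c : ℤ, c ∣ 2 * a * b → IsUnit (c : ℤ_[p]) := fun c hc => by
    by_contra h
    rw [PadicInt.not_isUnit_iff, PadicInt.norm_intCast_lt_one_iff] at h
    exact hdvd (h.trans hc)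
  obtain ⟨x, y, hxy⟩ := PadicInt.exists_mul_sq_add_mul_sq_eq_one hp
    (isUnit_of_dvd a ⟨2 * b, by ring⟩) (isUnit_of_dvd b ⟨2 * a, by ring⟩)
  have hxyQ : (a : ℚ_[p]) * (x : ℚ_[p]) ^ 2 + (b : ℚ_[p]) * (y : ℚ_[p]) ^ 2 = 1 := by
    exact_mod_cast congrArg ((↑) : ℤ_[p] → ℚ_[p]) hxy
  refine QuaternionAlgebra.not_isUnit_mk_one_of_mul_sq_add_mul_sq_eq_one hxyQ (hram _ fun h0 => ?_)
  simpa using congrArg QuaternionAlgebra.re h0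

/-- if a prime `p` divides the reduced discriminant of `H_ℚ(a,b)`
(for nonzero integers `a, b`), i.e. `H_ℚ(a,b)` ramifies at `p` in the sense that
its base change to `ℚ_p` is a division algebra, then `p ∣ 2ab`. -/
theorem prime_dvd_two_mul_a_mul_b_of_ramified
    (a b : ℤ) (ha : a ≠ 0) (hb : b ≠ 0) (p : ℕ) [Fact p.Prime]
    (hram : ∀ x : ℍ[ℚ_[p], (a : ℚ_[p]), (b : ℚ_[p])], x ≠ 0 → IsUnit x) :
    (p : ℤ) ∣ 2 * a * b :=
  prime_dvd_two_mul_a_mul_b_of_ramified_general a b p hram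
end
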